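/- arXiv:2101.10924 — 2 statements merged into one kernel-verified Lean document; each statement's English description precedes it below -/
import Mathlib

section
/- The coefficients C_n(r,j) (as in the previous setup) satisfy the scaling symmetry C_n(r,j) = (r+1)^n · C_n(−r/(r+1), (j−r)/(r+1)) as an identity of rational functions of r and j. -/
noncomputable section

/-- The field `ℚ(r,j)` of rational functions in the two formal variables `r`, `j`. -/
abbrev KK : Type := FractionRing (MvPolynomial (Fin 2) ℚ)

/-- The formal variable `r` as an element of `ℚ(r,j)`. -/
def Rv : KK := algebraMap (MvPolynomial (Fin 2) ℚ) KK (MvPolynomial.X 0)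

/-- The formal variable `j` as an element of `ℚ(r,j)`. -/
def Jv : KK := algebraMap (MvPolynomial (Fin 2) ℚ) KK (MvPolynomial.X 1)

/-- Generalized binomial coefficient `binom(a,k) = a(a-1)⋯(a-k+1)/k!`. -/
def gbinom (a : KK) (k : ℕ) : KK :=
  (∏ i ∈ Finset.range k, (a - (i : KK))) / (k.factorial : KK)

/-- The binomial-series power `(1+v)^a = Σ_k binom(a,k) v^k`, well defined as a power
series when `v` has zero constant term. -/
def bpow (a : KK) (v : PowerSeries KK) : PowerSeries KK :=
  PowerSeries.mk fun n =>
    ∑ k ∈ Finset.range (n + 1), gbinom a k * PowerSeries.coeff n (v ^ k)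

/-- `isW ρ w` says that `w = w(u) ∈ 1 + u + u²·[[u]]` solves
`w^{ρ+1}/(ρ(ρ+1)) - w/ρ + 1/(ρ+1) = u²/2`, where `w^{ρ+1}` is the binomial series
`(1 + (w-1))^{ρ+1}`. -/
def isW (ρ : KK) (w : PowerSeries KK) : Prop :=
  PowerSeries.coeff 0 w = 1 ∧ PowerSeries.coeff 1 w = 1 ∧
    PowerSeries.C (ρ * (ρ + 1))⁻¹ * bpow (ρ + 1) (w - 1)
        - PowerSeries.C ρ⁻¹ * w + PowerSeries.C (ρ + 1)⁻¹
      = PowerSeries.C (2 : KK)⁻¹ * PowerSeries.X ^ 2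

/-- `Cco a w n` is the coefficient `C_n(r,a)`: the coefficient of `u^{n+1}` in
`(w^{a+1} - 1)/(a+1)`. -/
def Cco (a : KK) (w : PowerSeries KK) (n : ℕ) : KK :=
  (a + 1)⁻¹ * PowerSeries.coeff (n + 1) (bpow (a + 1) (w - 1) - 1)

/-- `fT a w` is the series `f_a(T) = Σ_{k≥0} (2k+1)!! C_{2k}(r,a) (-T)^k`. -/
def fT (a : KK) (w : PowerSeries KK) : PowerSeries KK :=
  PowerSeries.mk fun k =>
    (Nat.doubleFactorial (2 * k + 1) : KK) * Cco a w (2 * k) * (-1) ^ k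

/-- The formal derivative `d/dT` of a power series. -/
def psDeriv (f : PowerSeries KK) : PowerSeries KK :=
  PowerSeries.mk fun n => ((n : KK) + 1) * PowerSeries.coeff (n + 1) f


/-!
Put `s = r + 1` and `ρ = -r/s`. Binomial series compose, `(v^b)^a = v^(ab)`: for fixed `n` the
`n`-th coefficients of both sides are polynomials in the exponent, and they agree at natural
exponents, where everything is an honest power. Hence `W(u) = w(u/s)^s` satisfies
`W^(ρ+1) = w(u/s)`, and substituting `u ↦ u/s` in `s²` times the equation for `w` shows that `W`
solves the equation for `ρ`. That equation has only one solution in `1 + u + u²[[u]]`: if two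
solutions agree below `u^N` (`N ≥ 2`), the `u^(N+1)`-coefficient of the difference of the two
equations is the difference of their `u^N`-coefficients. So `w' = W`, and for `a = (j-r)/s` we get
`W^(a+1) = w(u/s)^(j+1)`, whose `u^(n+1)`-coefficient is `s^-(n+1)` times that of `w^(j+1)`.
-/

open PowerSeries Finset

lemma gbinom_eq_descPochhammer_eval (a : KK) (k : ℕ) :
    gbinom a k = (descPochhammer KK k).eval a / k.factorial := by
  rw [gbinom, descPochhammer_eval_eq_prod_range]

lemma gbinom_natCast (m k : ℕ) : gbinom (m : KK) k = m.choose k := by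
  rw [gbinom_eq_descPochhammer_eval, descPochhammer_eval_eq_descFactorial,
    Nat.descFactorial_eq_factorial_mul_choose, Nat.cast_mul,
    mul_div_cancel_left₀ _ (Nat.cast_ne_zero.mpr k.factorial_ne_zero)]

lemma gbinom_one (a : KK) : gbinom a 1 = a := by simp [gbinom]

lemma gbinom_two (a : KK) : gbinom a 2 = a * (a - 1) / 2 := by
  simp [gbinom, prod_range_succ]

lemma coeff_bpow (a : KK) (v : PowerSeries KK) (n : ℕ) :
    coeff n (bpow a v) = ∑ k ∈ range (n + 1), gbinom a k * coeff n (v ^ k) :=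
  coeff_mk _ _

lemma constantCoeff_bpow (a : KK) (v : PowerSeries KK) : constantCoeff (bpow a v) = 1 := by
  simp [← coeff_zero_eq_constantCoeff, coeff_bpow, gbinom]

lemma coeff_one_bpow (a : KK) (v : PowerSeries KK) : coeff 1 (bpow a v) = a * coeff 1 v := by
  simp [coeff_bpow, sum_range_succ, gbinom_one]

lemma bpow_natCast {v : PowerSeries KK} (hv : constantCoeff v = 0) (m : ℕ) :
    bpow (m : KK) v = (1 + v) ^ m := by
  ext n
  have hext : ∀ s, range (n + 1) ⊆ s → range (m + 1) ⊆ s →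
      ∑ k ∈ s, gbinom (m : KK) k * coeff n (v ^ k) = coeff n ((1 + v) ^ m) := by
    intro s hn hm
    rw [add_comm, add_pow, map_sum, ← sum_subset hm]
    · refine sum_congr rfl fun k _ => ?_
      rw [one_pow, mul_one, ← map_natCast (C (R := KK)), coeff_mul_C, gbinom_natCast, mul_comm]
    · intro k _ hk
      rw [gbinom_natCast, Nat.choose_eq_zero_of_lt (by simpa using hk), Nat.cast_zero, zero_mul]
  rw [coeff_bpow, ← hext (range (n + 1) ∪ range (m + 1)) subset_union_left subset_union_right]
  refine sum_subset subset_union_left fun k _ hk => ?_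
  rw [X_pow_dvd_iff.mp (pow_dvd_pow_of_dvd (X_dvd_iff.mpr hv) k) n (by simpa using hk), mul_zero]

lemma bpow_one {v : PowerSeries KK} (hv : constantCoeff v = 0) : bpow 1 v = 1 + v := by
  simpa using bpow_natCast hv 1

lemma rescale_C {R : Type*} [CommSemiring R] (c x : R) : rescale c (C x) = C x := by
  ext n
  rw [coeff_rescale, coeff_C]
  split_ifs with h <;> simp [h]

lemma rescale_bpow (c a : KK) (v : PowerSeries KK) :
    rescale c (bpow a v) = bpow a (rescale c v) := by
  ext n
  simp only [coeff_rescale, coeff_bpow, mul_sum, ← map_pow]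
  ring_nf

def HasPolynomialCoeffs {R : Type*} [CommRing R] (F : R → PowerSeries R) : Prop :=
  ∃ P : PowerSeries (Polynomial R), ∀ x, map (Polynomial.evalRingHom x) P = F x

namespace HasPolynomialCoeffs

variable {R : Type*} [CommRing R] {F G : R → PowerSeries R}

lemma const (f : PowerSeries R) : HasPolynomialCoeffs fun _ => f :=
  ⟨map Polynomial.C f, fun x => by ext; simp [coeff_map]⟩

lemma sub (hF : HasPolynomialCoeffs F) (hG : HasPolynomialCoeffs G) :
    HasPolynomialCoeffs (F - G) :=
  let ⟨P, hP⟩ := hF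
  let ⟨Q, hQ⟩ := hG
  ⟨P - Q, fun x => by rw [map_sub, hP, hQ, Pi.sub_apply]⟩

lemma eq_of_natCast [IsDomain R] [CharZero R] (hF : HasPolynomialCoeffs F)
    (hG : HasPolynomialCoeffs G) (h : ∀ m : ℕ, F m = G m) : F = G := by
  obtain ⟨P, hP⟩ := hF
  obtain ⟨Q, hQ⟩ := hG
  have hPQ : ∀ n, coeff n P = coeff n Q := fun n =>
    Polynomial.eq_of_infinite_eval_eq _ _ <|
      (Set.infinite_range_of_injective Nat.cast_injective).mono <| by
        rintro _ ⟨m, rfl⟩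
        simpa [← hP, ← hQ, coeff_map] using congrArg (coeff n) (h m)
  funext x
  rw [← hP, ← hQ]
  ext n
  rw [coeff_map, coeff_map, hPQ]

end HasPolynomialCoeffs

lemma HasPolynomialCoeffs.bpow {F : KK → PowerSeries KK} (hF : HasPolynomialCoeffs F) (a : KK) :
    HasPolynomialCoeffs fun x => bpow a (F x) := by
  obtain ⟨P, hP⟩ := hF
  refine ⟨mk fun n => ∑ k ∈ range (n + 1), Polynomial.C (gbinom a k) * coeff n (P ^ k),
    fun x => ?_⟩
  ext n
  simp [coeff_bpow, ← hP, ← map_pow, coeff_map]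

lemma hasPolynomialCoeffs_bpow_mul (v : PowerSeries KK) (c : KK) :
    HasPolynomialCoeffs fun x => bpow (c * x) v := by
  refine ⟨mk fun n => ∑ k ∈ range (n + 1), Polynomial.C (coeff n (v ^ k) / k.factorial) *
    (descPochhammer KK k).comp (Polynomial.C c * Polynomial.X), fun x => ?_⟩
  ext n
  simp only [coeff_map, coeff_mk, coeff_bpow, gbinom_eq_descPochhammer_eval, map_sum]
  refine sum_congr rfl fun k _ => ?_
  simp only [Polynomial.coe_evalRingHom, Polynomial.eval_mul, Polynomial.eval_C,
    Polynomial.eval_comp, Polynomial.eval_X]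
  ring

lemma bpow_pow_sub_one {v : PowerSeries KK} (hv : constantCoeff v = 0) (m : ℕ) (a : KK) :
    bpow a ((1 + v) ^ m - 1) = bpow (m * a) v := by
  have hvm : constantCoeff ((1 + v) ^ m - 1) = 0 := by simp [hv]
  have hF := hasPolynomialCoeffs_bpow_mul ((1 + v) ^ m - 1) 1
  simp only [one_mul] at hF
  refine congrFun (hF.eq_of_natCast (hasPolynomialCoeffs_bpow_mul v m) fun l => ?_) a
  rw [bpow_natCast hvm, add_sub_cancel, ← pow_mul, ← Nat.cast_mul, bpow_natCast hv]

lemma bpow_bpow_sub_one {v : PowerSeries KK} (hv : constantCoeff v = 0) (a b : KK) :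
    bpow a (bpow b v - 1) = bpow (a * b) v := by
  have hF := ((hasPolynomialCoeffs_bpow_mul v 1).sub (.const 1)).bpow a
  simp only [one_mul, Pi.sub_apply] at hF
  refine congrFun (hF.eq_of_natCast (hasPolynomialCoeffs_bpow_mul v a) fun m => ?_) b
  rw [bpow_natCast hv, bpow_pow_sub_one hv, mul_comm]

lemma bpow_rescale_bpow_sub_one {v : PowerSeries KK} (hv : constantCoeff v = 0) (a b c : KK) :
    bpow a (rescale c (bpow b v) - 1) = rescale c (bpow (a * b) v) := by
  rw [← map_one (rescale c), ← map_sub, ← rescale_bpow, bpow_bpow_sub_one hv]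

section Difference

variable {R : Type*} [CommRing R] {e₁ e₂ : PowerSeries R} {N : ℕ}

lemma X_pow_dvd_pow_sub_pow (h₁ : X ∣ e₁) (h₂ : X ∣ e₂) (hd : X ^ N ∣ e₁ - e₂) (k : ℕ) :
    X ^ (k - 1 + N) ∣ e₁ ^ k - e₂ ^ k := by
  rw [← geom_sum₂_mul, pow_add]
  refine mul_dvd_mul (dvd_sum fun i hi => ?_) hd
  have hi : X ^ (k - 1) = (X : PowerSeries R) ^ i * X ^ (k - 1 - i) := by
    rw [← pow_add, Nat.add_sub_cancel' (Nat.le_sub_one_of_lt (mem_range.mp hi))]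
  rw [hi]
  exact mul_dvd_mul (pow_dvd_pow_of_dvd h₁ i) (pow_dvd_pow_of_dvd h₂ _)

lemma coeff_sq_sub_sq (hs : X ∣ e₁ + e₂) (hd : X ^ N ∣ e₁ - e₂) :
    coeff (N + 1) (e₁ ^ 2 - e₂ ^ 2) = coeff 1 (e₁ + e₂) * coeff N (e₁ - e₂) := by
  obtain ⟨s, hs⟩ := hs
  obtain ⟨d, hd⟩ := hd
  rw [sq_sub_sq, hs, hd, mul_mul_mul_comm, ← pow_succ']
  simp [coeff_X_pow_mul']

end Difference

lemma coeff_bpow_sub_bpow (a : KK) {e₁ e₂ : PowerSeries KK} (h₁ : X ∣ e₁) (h₂ : X ∣ e₂) {N : ℕ}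
    (hN : 1 ≤ N) (hd : X ^ N ∣ e₁ - e₂) :
    coeff (N + 1) (bpow a e₁ - bpow a e₂) =
      a * coeff (N + 1) (e₁ - e₂) + a * (a - 1) / 2 * coeff 1 (e₁ + e₂) * coeff N (e₁ - e₂) := by
  rw [map_sub, coeff_bpow, coeff_bpow, ← sum_sub_distrib]
  simp_rw [← mul_sub, ← map_sub]
  rw [sum_eq_add 1 2 (by norm_num) ?_ (fun h => absurd (mem_range.2 (by omega)) h)
    (fun h => absurd (mem_range.2 (by omega)) h), gbinom_one, gbinom_two, pow_one, pow_one,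
    coeff_sq_sub_sq (dvd_add h₁ h₂) hd]
  · ring
  · intro k _ ⟨hk1, hk2⟩
    obtain rfl | hk : k = 0 ∨ 3 ≤ k := by omega
    · simp
    · rw [X_pow_dvd_iff.mp (X_pow_dvd_pow_sub_pow h₁ h₂ hd k) (N + 1) (by omega), mul_zero]

namespace isW

variable {ρ : KK} {w w₁ w₂ : PowerSeries KK}

lemma constantCoeff_eq_one (hw : isW ρ w) : constantCoeff w = 1 := by
  rw [← coeff_zero_eq_constantCoeff_apply, hw.1]

lemma X_dvd_sub_one (hw : isW ρ w) : X ∣ w - 1 := by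
  rw [X_dvd_iff, map_sub, hw.constantCoeff_eq_one, map_one, sub_self]

-- With `0⁻¹ = 0`, the constant term of the equation reads `1 = 0` when `ρ ∈ {0, -1}`.
lemma mul_add_one_ne_zero (hw : isW ρ w) : ρ * (ρ + 1) ≠ 0 := by
  have h0 := congrArg constantCoeff hw.2.2
  simp only [map_add, map_sub, map_mul, constantCoeff_C, constantCoeff_bpow, map_pow,
    constantCoeff_X, hw.constantCoeff_eq_one] at h0
  intro h
  rcases mul_eq_zero.mp h with h | h
  · simp [h] at h0
  · rw [eq_neg_of_add_eq_zero_left h] at h0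
    norm_num at h0

lemma unique (h₁ : isW ρ w₁) (h₂ : isW ρ w₂) : w₁ = w₂ := by
  have hρ := h₁.mul_add_one_ne_zero
  suffices h : ∀ N, X ^ (N + 2) ∣ w₁ - w₂ by
    rw [← sub_eq_zero]
    ext n
    simpa using X_pow_dvd_iff.mp (h n) n (by omega)
  intro N
  induction N with
  | zero =>
    refine X_pow_dvd_iff.mpr fun m hm => ?_
    interval_cases m <;> simp [h₁.constantCoeff_eq_one, h₂.constantCoeff_eq_one, h₁.2.1, h₂.2.1]
  | succ N ih =>
    have hsub : (w₁ - 1) - (w₂ - 1) = w₁ - w₂ := sub_sub_sub_cancel_right _ _ _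
    have hstep := coeff_bpow_sub_bpow (ρ + 1) h₁.X_dvd_sub_one h₂.X_dvd_sub_one
      (N := N + 2) (by omega) (hsub ▸ ih)
    have hcoeff := congrArg (coeff (N + 3)) (h₁.2.2.trans h₂.2.2.symm)
    rw [hsub] at hstep
    have h2 : coeff 1 ((w₁ - 1) + (w₂ - 1)) = 2 := by
      simp only [map_add, map_sub, h₁.2.1, h₂.2.1, coeff_one, if_neg one_ne_zero, sub_zero]
      norm_num
    rw [h2] at hstep
    simp only [map_add, map_sub, coeff_C_mul, coeff_C] at hstep hcoeff
    have hN : coeff (N + 2) (w₁ - w₂) = 0 := by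
      field_simp [left_ne_zero_of_mul hρ, right_ne_zero_of_mul hρ] at hcoeff
      refine mul_left_cancel₀ hρ ?_
      rw [map_sub, mul_zero]
      linear_combination hcoeff - hstep
    refine X_pow_dvd_iff.mpr fun m hm => ?_
    obtain hm | rfl := Nat.lt_succ_iff_lt_or_eq.mp hm
    · exact X_pow_dvd_iff.mp ih m hm
    · exact hN

end isW

lemma isW.rescale_bpow {r : KK} {w : PowerSeries KK} (hw : isW r w) :
    isW (-r / (r + 1)) (rescale (r + 1)⁻¹ (bpow (r + 1) (w - 1))) := by
  obtain ⟨hr, hr1⟩ := mul_ne_zero_iff.mp hw.mul_add_one_ne_zero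
  have he : constantCoeff (w - 1) = 0 := X_dvd_iff.mp hw.X_dvd_sub_one
  set s := r + 1
  have hρ1 : -r / s + 1 = s⁻¹ := by field_simp; ring
  refine ⟨by simp [coeff_rescale, constantCoeff_bpow], ?_, ?_⟩
  · simp [coeff_rescale, coeff_one_bpow, hw.2.1, hr1]
  rw [hρ1, bpow_rescale_bpow_sub_one he, inv_mul_cancel₀ hr1, bpow_one he, add_sub_cancel]
  have ha : (-r / s * s⁻¹)⁻¹ = -(s ^ 2 * r⁻¹) := by field_simp
  have hb : (-r / s)⁻¹ = -(s ^ 2 * (r * s)⁻¹) := by field_simp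
  have hc : s⁻¹⁻¹ = s ^ 2 * s⁻¹ := by field_simp
  have hC : C s * C s⁻¹ = 1 := by rw [← map_mul, mul_inv_cancel₀ hr1, map_one]
  calc C (-r / s * s⁻¹)⁻¹ * rescale s⁻¹ w - C (-r / s)⁻¹ * rescale s⁻¹ (bpow s (w - 1)) + C s⁻¹⁻¹
      = rescale s⁻¹ (C (s ^ 2) *
          (C (r * s)⁻¹ * bpow s (w - 1) - C r⁻¹ * w + C s⁻¹)) := by
        simp only [ha, hb, hc, map_add, map_sub, map_mul, map_neg, rescale_C]
        ring
    _ = rescale s⁻¹ (C (s ^ 2) * (C 2⁻¹ * X ^ 2)) := by rw [hw.2.2]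
    _ = C 2⁻¹ * X ^ 2 := by
        simp only [map_mul, map_pow, rescale_C, rescale_X]
        linear_combination (C 2⁻¹ * X ^ 2) * (C s * C s⁻¹ + 1) * hC

lemma Cco_eq_pow_mul_Cco_rescale_bpow {r : KK} (hr : r + 1 ≠ 0) {w : PowerSeries KK}
    (hw : constantCoeff (w - 1) = 0) (j : KK) (n : ℕ) :
    Cco j w n =
      (r + 1) ^ n * Cco ((j - r) / (r + 1)) (rescale (r + 1)⁻¹ (bpow (r + 1) (w - 1))) n := by
  have ha : (j - r) / (r + 1) + 1 = (j + 1) / (r + 1) := by field_simp; ring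
  simp only [Cco, ha, bpow_rescale_bpow_sub_one hw, div_mul_cancel₀ _ hr, map_sub, coeff_rescale,
    coeff_one, if_neg n.succ_ne_zero, sub_zero, inv_div]
  have hs : (r + 1) ^ n * (r + 1) * (r + 1)⁻¹ ^ (n + 1) = 1 := by
    rw [← pow_succ, ← mul_pow, mul_inv_cancel₀ hr, one_pow]
  linear_combination -(coeff (n + 1) (bpow (j + 1) (w - 1)) / (j + 1)) * hs

/-- The scaling symmetry `C_n(r,j) = (r+1)^n · C_n(-r/(r+1), (j-r)/(r+1))`, where `w` is
the solution of the defining equation with parameter `r` and `w'` the one with parameter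
`-r/(r+1)`. -/
theorem stmt6 (n : ℕ) (w w' : PowerSeries KK)
    (hw : isW Rv w) (hw' : isW (-Rv / (Rv + 1)) w') :
    Cco Jv w n = (Rv + 1) ^ n * Cco ((Jv - Rv) / (Rv + 1)) w' n := by
  rw [hw'.unique hw.rescale_bpow]
  exact Cco_eq_pow_mul_Cco_rescale_bpow (right_ne_zero_of_mul hw.mul_add_one_ne_zero)
    (X_dvd_iff.mp hw.X_dvd_sub_one) Jv n

end
end

section
/- Let r ≥ 2 be an integer, C a constant, and L = ∂^r + C·x the differential operator acting on functions of x (∂ = d/dx). For λ ∈ ℂ the pseudodifferential operator L^λ has the expansion L^λ = Σ_{j,s ≥ 0} C^{j+s}·d_{j,s}(λ,r)·x^s·∂^{r(λ−s)−(r+1)j}, where d_{j,s}(λ,r) = (1/s!)·Σ_{p=0}^{j} c_{p,j}(r)·(λ)⁻_{s+p+j}, with (λ)⁻_n = λ(λ−1)⋯(λ−n+1) the descending Pochhammer symbol and c_{p,j}(r) defined by (1/p!)·(((1+x)^{r+1}−1−(r+1)x)/((r+1)x))^p = Σ_j c_{p,j}(r)x^j. In particular, for λ a non-negative integer the claim is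 the exact operator identity, provable by induction via L^{λ+1} = L^λ·L. -/
/-- The power series `G(x) = ((1+x)^{r+1} - 1 - (r+1)x)/((r+1)x)`, whose coefficient of
`x^j` (for `j ≥ 1`) is `binom(r+1,j+1)/(r+1) = binom(r,j)/(j+1)`. -/
noncomputable def cG (r : ℕ) : PowerSeries ℚ :=
  PowerSeries.mk fun j => if j = 0 then 0 else (Nat.choose r j : ℚ) / ((j : ℚ) + 1)

/-- `c_{p,j}(r)`: the coefficient of `x^j` in `(1/p!)·G(x)^p`. -/
noncomputable def cpj (r p j : ℕ) : ℚ :=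
  (p.factorial : ℚ)⁻¹ * PowerSeries.coeff j ((cG r) ^ p)

/-- `d_{j,s}(λ,r) = (1/s!)·Σ_{p=0}^{j} c_{p,j}(r)·(λ)⁻_{s+p+j}`, with `(λ)⁻_n` the
descending Pochhammer symbol. -/
noncomputable def ddjs (r lam j s : ℕ) : ℚ :=
  (s.factorial : ℚ)⁻¹ *
    ∑ p ∈ Finset.range (j + 1), cpj r p j * (Nat.descFactorial lam (s + p + j) : ℚ)

/-- Integer powers `D^k` for `k ∈ ℤ`, where `Dinv` is a two-sided inverse of `D`. -/
def ipow {A : Type} [Monoid A] (d dinv : A) (k : ℤ) : A :=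
  if 0 ≤ k then d ^ k.toNat else dinv ^ (-k).toNat

/-!
Induction on `λ` through `L^(λ+1) = L^λ L`. Since `[∂^k, x] = k ∂^(k-1)` for every `k ∈ ℤ`,
right multiplication of `x^s ∂^k` by `L` gives `x^s ∂^(k+r) + C x^(s+1) ∂^k + C k x^s ∂^(k-1)`,
so the claim reduces to the recursion
`d_{j,s}(λ+1) = d_{j,s}(λ) + d_{j,s-1}(λ) + (r(λ-s) - (r+1)(j-1)) d_{j-1,s}(λ)`.
With `(λ+1)⁻_n = (λ)⁻_n + n (λ)⁻_{n-1}` this reduces to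
`(p + j) c_{p,j} = (r p - j + 1) c_{p,j-1} + r c_{p-1,j-1}`, the coefficient form of the equation
`p G^p + (x + x²) (G^p)' = r p x G^p + r p x G^(p-1)`, which follows from
`G + (x + x²) G' = r x G + r x`.
-/

open Finset

section PowerSeries

open PowerSeries

lemma constantCoeff_cG (r : ℕ) : constantCoeff (cG r) = 0 := by simp [cG]

lemma coeff_succ_cG (r j : ℕ) : coeff (j + 1) (cG r) = (r.choose (j + 1) : ℚ) / (j + 2) := by
  simp [cG]; ring

lemma cast_choose_succ_mul (r j : ℕ) :
    (r.choose (j + 1) : ℚ) * (j + 1) = (r - j) * r.choose j := by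
  rcases le_or_gt j r with h | h
  · have := congrArg (Nat.cast : ℕ → ℚ) (Nat.choose_succ_right_eq r j)
    push_cast [Nat.cast_sub h] at this
    linarith
  · simp [Nat.choose_eq_zero_of_lt h, Nat.choose_eq_zero_of_lt (Nat.lt_succ_of_lt h)]

/-- Since `(r + 1) X G = (1 + X)^(r + 1) - 1 - (r + 1) X`, differentiating gives
`(1 + X) ((r + 1) X G)' = (r + 1) ((r + 1) X G + r X)`. -/
lemma cG_ode (r : ℕ) :
    cG r + (X + X ^ 2) * d⁄dX ℚ (cG r) = (r : ℚ) • (X * cG r) + (r : ℚ) • X := by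
  have hX2 : ∀ f : ℚ⟦X⟧, (X + X ^ 2) * f = X * f + X * (X * f) := fun f => by ring
  ext n
  rcases n with _ | _ | j
  · simp [cG]
  · simp [hX2, coeff_succ_X_mul, coeff_derivative, coeff_succ_cG, constantCoeff_cG]
  · simp only [hX2, map_add, map_smul, coeff_succ_X_mul, coeff_derivative, coeff_succ_cG,
      smul_eq_mul, coeff_X, if_neg (by omega : j + 2 ≠ 1)]
    have := cast_choose_succ_mul r (j + 1)
    push_cast at this ⊢
    field_simp
    linear_combination ((j : ℚ) + 3) * this

lemma cG_pow_ode (r p : ℕ) :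
    ((p : ℚ) + 1) • cG r ^ (p + 1) + (X + X ^ 2) * d⁄dX ℚ (cG r ^ (p + 1))
      = ((r : ℚ) * (p + 1)) • (X * cG r ^ (p + 1)) + ((r : ℚ) * (p + 1)) • (X * cG r ^ p) := by
  have hD : d⁄dX ℚ (cG r ^ (p + 1)) = ((p : ℚ) + 1) • (cG r ^ p * d⁄dX ℚ (cG r)) := by
    rw [Derivation.leibniz_pow, Nat.add_sub_cancel, smul_eq_mul, ← Nat.cast_smul_eq_nsmul ℚ]
    push_cast; rfl
  rw [hD]
  have h := cG_ode r
  simp only [smul_eq_C_mul, map_mul] at h ⊢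
  linear_combination C ((p : ℚ) + 1) * cG r ^ p * h

lemma coeff_succ_cG_pow_succ (r p j : ℕ) :
    ((p : ℚ) + j + 2) * coeff (j + 1) (cG r ^ (p + 1))
      = ((r : ℚ) * (p + 1) - j) * coeff j (cG r ^ (p + 1))
        + (r * (p + 1)) * coeff j (cG r ^ p) := by
  have h := congrArg (coeff (j + 1)) (cG_pow_ode r p)
  have hX2 : ∀ f : ℚ⟦X⟧, (X + X ^ 2) * f = X * f + X * (X * f) := fun f => by ring
  simp only [hX2, map_add, map_smul, smul_eq_mul, coeff_succ_X_mul] at h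
  rcases j with _ | j
  · simp only [coeff_zero_X_mul, coeff_derivative] at h ⊢
    push_cast at h ⊢
    linarith
  · simp only [coeff_succ_X_mul, coeff_derivative] at h ⊢
    push_cast at h ⊢
    linarith

lemma cpj_zero_left (r j : ℕ) : cpj r 0 j = if j = 0 then 1 else 0 := by
  simp [cpj, coeff_one]

lemma cpj_eq_zero_of_lt {r p j : ℕ} (h : j < p) : cpj r p j = 0 := by
  have hX : X ^ p ∣ cG r ^ p := pow_dvd_pow_of_dvd (X_dvd_iff.2 (constantCoeff_cG r)) p
  simp [cpj, X_pow_dvd_iff.1 hX j h]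

lemma cpj_succ_succ (r p j : ℕ) :
    ((p : ℚ) + j + 2) * cpj r (p + 1) (j + 1)
      = ((r : ℚ) * (p + 1) - j) * cpj r (p + 1) j + r * cpj r p j := by
  have h := coeff_succ_cG_pow_succ r p j
  have hp : (p.factorial : ℚ) ≠ 0 := by positivity
  simp only [cpj, Nat.factorial_succ]
  push_cast
  field_simp
  linear_combination h

end PowerSeries

section Pochhammer

variable {S : Type*} [CommRing S]

lemma cast_descFactorial_succ (l m : ℕ) :
    (l.descFactorial (m + 1) : S) = (l - m) * l.descFactorial m := by
  rcases le_or_gt m l with h | h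
  · rw [Nat.descFactorial_succ]
    push_cast [Nat.cast_sub h]
    ring
  · rw [Nat.descFactorial_eq_zero_iff_lt.2 (by omega : l < m + 1),
      Nat.descFactorial_eq_zero_iff_lt.2 h]
    simp

lemma cast_succ_descFactorial (l n : ℕ) :
    ((l + 1).descFactorial n : S) = l.descFactorial n + n * l.descFactorial (n - 1) := by
  rcases n with _ | m
  · simp
  · rw [Nat.succ_descFactorial_succ, cast_descFactorial_succ l m]
    push_cast
    ring

end Pochhammer

lemma Finset.sum_range_succ_eq_of_shift {M : Type*} [AddCommMonoid M] {f g : ℕ → M} {n : ℕ}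
    (h0 : g 0 = 0) (hsucc : ∀ i, g (i + 1) = f i) (hn : f n = 0) :
    ∑ i ∈ range (n + 1), g i = ∑ i ∈ range (n + 1), f i := by
  rw [sum_range_succ', sum_range_succ, h0, hn]
  simp only [hsucc]

/-- The order of `∂` in the `(j, s)` term of the expansion of `L^λ`. -/
def dOrder (r lam j s : ℕ) : ℤ := r * ((lam : ℤ) - s) - (r + 1) * j

/-- `s! · d_{j,s}(λ, r)`. -/
noncomputable def ddjsNum (r lam j s : ℕ) : ℚ :=
  ∑ p ∈ range (j + 1), cpj r p j * (lam.descFactorial (s + p + j) : ℚ)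

lemma ddjs_eq (r lam j s : ℕ) : ddjs r lam j s = (s.factorial : ℚ)⁻¹ * ddjsNum r lam j s := rfl

lemma ddjs_eq_zero_of_lt {r lam j s : ℕ} (h : lam < j + s) : ddjs r lam j s = 0 := by
  rw [ddjs_eq, ddjsNum, sum_eq_zero, mul_zero]
  intro p _
  rw [Nat.descFactorial_eq_zero_iff_lt.2 (by omega), Nat.cast_zero, mul_zero]

lemma sum_cpj_mul_succ_descFactorial (r lam j s : ℕ) :
    ∑ p ∈ range (j + 2), cpj r p (j + 1) * ((p + j + 1) * (lam.descFactorial (s + p + j) : ℚ))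
      = dOrder r lam j s * ddjsNum r lam j s := by
  set D : ℕ → ℚ := fun p => lam.descFactorial (s + p + j)
  set a : ℕ → ℚ := fun q => (r * q - j) * cpj r q j * D q
  have hD : ∀ q, D (q + 1) = (lam - (s + q + j)) * D q := fun q => by
    simp only [D, show s + (q + 1) + j = s + q + j + 1 by ring, cast_descFactorial_succ]
    push_cast; ring
  have ha0 : a 0 = 0 := by rcases j with _ | j <;> simp [a, cpj_zero_left]
  have haj : a (j + 1) = 0 := by simp [a, cpj_eq_zero_of_lt (Nat.lt_succ_self j)]
  have hsucc : ∀ q, cpj r (q + 1) (j + 1) * ((↑(q + 1) + j + 1) * D (q + 1))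
      = a (q + 1) + r * (lam - (s + q + j)) * (cpj r q j * D q) := fun q => by
    simp only [a, hD]; push_cast
    linear_combination (lam - (s + q + j)) * D q * cpj_succ_succ r q j
  change ∑ p ∈ range (j + 2), cpj r p (j + 1) * ((p + j + 1) * D p) = _
  rw [sum_range_succ', cpj_zero_left, if_neg (Nat.succ_ne_zero j), zero_mul, add_zero]
  simp only [hsucc, sum_add_distrib, ← sum_range_succ_eq_of_shift ha0 (fun _ => rfl) haj]
  rw [ddjsNum, mul_sum, ← sum_add_distrib]
  refine sum_congr rfl fun q _ => ?_
  simp only [a, D, dOrder]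
  push_cast; ring

lemma ddjsNum_succ (r lam j s : ℕ) :
    ddjsNum r (lam + 1) j s = ddjsNum r lam j s + s * ddjsNum r lam j (s - 1)
      + if j = 0 then 0 else dOrder r lam (j - 1) s * ddjsNum r lam (j - 1) s := by
  have hsplit : ddjsNum r (lam + 1) j s = ddjsNum r lam j s + s * ddjsNum r lam j (s - 1)
      + ∑ p ∈ range (j + 1), cpj r p j * ((p + j) * (lam.descFactorial (s + p + j - 1) : ℚ)) := by
    simp only [ddjsNum, mul_sum, ← sum_add_distrib]
    refine sum_congr rfl fun p _ => ?_
    rw [cast_succ_descFactorial]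
    rcases s with _ | s
    · simp; ring
    · rw [show s + 1 + p + j - 1 = s + 1 - 1 + p + j by omega]
      push_cast; ring
  rw [hsplit]
  rcases j with _ | j
  · simp
  · rw [if_neg (Nat.succ_ne_zero j), Nat.add_sub_cancel, ← sum_cpj_mul_succ_descFactorial]
    congr 1
    refine sum_congr rfl fun p _ => ?_
    rw [show s + p + (j + 1) - 1 = s + p + j by omega]
    push_cast; ring

lemma ddjs_succ (r lam j s : ℕ) :
    ddjs r (lam + 1) j s = ddjs r lam j s + (if s = 0 then 0 else ddjs r lam j (s - 1))
      + if j = 0 then 0 else dOrder r lam (j - 1) s * ddjs r lam (j - 1) s := by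
  simp only [ddjs_eq, ddjsNum_succ, mul_add]
  congr 1
  · rcases s with _ | s
    · simp
    · rw [if_neg (Nat.succ_ne_zero s), Nat.add_sub_cancel, Nat.factorial_succ]
      push_cast
      field_simp
  · split_ifs <;> ring

section Commutator

variable {A : Type*} [Ring A] (u : Aˣ) (x : A)

theorem Units.zpow_mul_eq_mul_zpow_add_zsmul (hx : (u : A) * x - x * u = 1) (k : ℤ) :
    ((u ^ k : Aˣ) : A) * x = x * (u ^ k : Aˣ) + k • ((u ^ (k - 1) : Aˣ) : A) := by
  set δ : ℤ → A := fun k => (u ^ k : Aˣ) * x - x * (u ^ k : Aˣ) - k • ((u ^ (k - 1) : Aˣ) : A)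
  have hδ : ∀ k, δ (k + 1) = δ k * u := by
    intro k
    have hk : ((u ^ k : Aˣ) : A) * (u * x - x * u) = (u ^ k : Aˣ) := by rw [hx, mul_one]
    have hsucc : ((u ^ (k + 1) : Aˣ) : A) = (u ^ k : Aˣ) * u := by
      rw [zpow_add_one, Units.val_mul]
    have hpred : ((u ^ (k - 1) : Aˣ) : A) * u = (u ^ k : Aˣ) := by
      rw [← Units.val_mul, ← zpow_add_one, sub_add_cancel]
    simp only [δ, add_sub_cancel_right, hsucc, add_smul, one_smul, sub_mul, smul_mul_assoc, hpred]
    rw [← sub_eq_zero]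
    calc _ = ((u ^ k : Aˣ) : A) * (u * x - x * u) - (u ^ k : Aˣ) := by noncomm_ring
      _ = 0 := by rw [hk, sub_self]
  suffices δ k = 0 by rw [← sub_eq_zero, ← sub_sub]; exact this
  induction k using Int.induction_on with
  | zero => simp [δ]
  | succ k ih => rw [hδ, ih, zero_mul]
  | pred k ih =>
    have h := hδ (-k - 1)
    rw [sub_add_cancel, ih] at h
    simpa using congrArg (· * ((u⁻¹ : Aˣ) : A)) h.symm

end Commutator

theorem ipow_eq_val_zpow {A : Type} [Monoid A] (d dinv : A) (h1 : d * dinv = 1)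
    (h2 : dinv * d = 1) (k : ℤ) : ipow d dinv k = ((⟨d, dinv, h1, h2⟩ : Aˣ) ^ k : Aˣ) := by
  unfold ipow
  split_ifs with hk
  · conv_rhs => rw [← Int.toNat_of_nonneg hk]
    rw [zpow_natCast, Units.val_pow_eq_pow_val]
  · conv_rhs => rw [← neg_neg k, ← Int.toNat_of_nonneg (by omega : 0 ≤ -k)]
    rw [zpow_neg, zpow_natCast, ← inv_pow, Units.val_pow_eq_pow_val]
    rfl

section Expansion

variable {A : Type*} [Ring A] [Algebra ℚ A] (u : Aˣ) (x : A)

def expansionTerm (r lam j s : ℕ) : A := x ^ s * (u ^ dOrder r lam j s : Aˣ)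

variable {u x}

lemma expansionTerm_mul (hx : (u : A) * x - x * u = 1) (C : ℚ) (r lam j s : ℕ) :
    expansionTerm u x r lam j s * ((u : A) ^ r + C • x)
      = expansionTerm u x r (lam + 1) j s + C • expansionTerm u x r (lam + 1) j (s + 1)
        + (C * dOrder r lam j s) • expansionTerm u x r (lam + 1) (j + 1) s := by
  have h1 : dOrder r (lam + 1) j s = dOrder r lam j s + r := by
    simp only [dOrder]; push_cast; ring
  have h2 : dOrder r (lam + 1) j (s + 1) = dOrder r lam j s := by
    simp only [dOrder]; push_cast; ring
  have h3 : dOrder r (lam + 1) (j + 1) s = dOrder r lam j s - 1 := by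
    simp only [dOrder]; push_cast; ring
  simp only [expansionTerm, h1, h2, h3, mul_add, mul_smul_comm, mul_assoc,
    Units.zpow_mul_eq_mul_zpow_add_zsmul u x hx, zpow_add, zpow_natCast, Units.val_mul,
    Units.val_pow_eq_pow_val, pow_succ, mul_smul, Int.cast_smul_eq_zsmul]
  rw [smul_add, add_assoc]

theorem pow_add_smul_eq_sum_expansionTerm (hx : (u : A) * x - x * u = 1) (C : ℚ) (r lam : ℕ) :
    ((u : A) ^ r + C • x) ^ lam = ∑ j ∈ range (lam + 1), ∑ s ∈ range (lam + 1),
      (C ^ (j + s) * ddjs r lam j s) • expansionTerm u x r lam j s := by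
  induction lam with
  | zero => simp [ddjs_eq, ddjsNum, cpj, expansionTerm, dOrder]
  | succ n ih =>
    set a : ℕ → ℕ → ℚ := fun j s => C ^ (j + s) * ddjs r n j s
    have ha : ∀ {j s}, n < j + s → a j s = 0 := fun h => by
      simp only [a, ddjs_eq_zero_of_lt h, mul_zero]
    have hsucc : ∀ j s, C ^ (j + s) * ddjs r (n + 1) j s = a j s
        + (if s = 0 then 0 else a j (s - 1) * C)
        + if j = 0 then 0 else a (j - 1) s * C * dOrder r n (j - 1) s := fun j s => by
      rw [ddjs_succ]
      rcases j with _ | j <;> rcases s with _ | s <;> simp [a, pow_succ] <;> ring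
    have hL : ((u : A) ^ r + C • x) ^ n = ∑ j ∈ range (n + 1 + 1), ∑ s ∈ range (n + 1 + 1),
        a j s • expansionTerm u x r n j s := by
      rw [ih, sum_range_succ _ (n + 1),
        sum_eq_zero (s := range (n + 1 + 1)) fun s _ => by rw [ha (by omega), zero_smul], add_zero]
      refine sum_congr rfl fun j _ => ?_
      rw [sum_range_succ _ (n + 1), ha (by omega), zero_smul, add_zero]
    simp only [pow_succ, hL, sum_mul, smul_mul_assoc, expansionTerm_mul hx, smul_add, smul_smul,
      hsucc, add_smul, sum_add_distrib, ite_smul, zero_smul]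
    congr 1
    congr 1
    · refine sum_congr rfl fun j _ => ?_
      refine (sum_range_succ_eq_of_shift (by simp) (fun s => by simp) ?_).symm
      rw [ha (by omega), zero_mul, zero_smul]
    · refine (sum_range_succ_eq_of_shift (by simp) (fun j => by simp [mul_assoc]) ?_).symm
      exact sum_eq_zero fun s _ => by rw [ha (by omega)]; simp

end Expansion

theorem stmt17_general (r : ℕ)
    (A : Type) [Ring A] [Algebra ℚ A] (d dinv xv : A)
    (h1 : d * dinv = 1) (h2 : dinv * d = 1) (h3 : d * xv - xv * d = 1)
    (C : ℚ) (lam : ℕ) :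
    (d ^ r + C • xv) ^ lam
      = ∑ j ∈ Finset.range (lam + 1), ∑ s ∈ Finset.range (lam + 1),
          (C ^ (j + s) * ddjs r lam j s) •
            (xv ^ s * ipow d dinv ((r : ℤ) * ((lam : ℤ) - (s : ℤ)) - ((r : ℤ) + 1) * (j : ℤ))) := by
  simp only [ipow_eq_val_zpow d dinv h1 h2]
  exact pow_add_smul_eq_sum_expansionTerm (u := ⟨d, dinv, h1, h2⟩) h3 C r lam

/-- In any `ℚ`-algebra of pseudodifferential operators — i.e. any `ℚ`-algebra with
elements `xv` (multiplication by `x`), `d` (`∂`) and `dinv` (`∂⁻¹`) satisfying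
`d·dinv = dinv·d = 1` and `[d, xv] = 1` — the operator `L = ∂^r + C·x` satisfies, for
every non-negative integer `λ`, the exact operator identity
`L^λ = Σ_{j,s} C^{j+s}·d_{j,s}(λ,r)·x^s·∂^{r(λ-s)-(r+1)j}`
(the sum over `0 ≤ j, s ≤ λ` containing all the nonzero terms). -/
theorem stmt17 (r : ℕ) (hr : 2 ≤ r)
    (A : Type) [Ring A] [Algebra ℚ A] (d dinv xv : A)
    (h1 : d * dinv = 1) (h2 : dinv * d = 1) (h3 : d * xv - xv * d = 1)
    (C : ℚ) (lam : ℕ) :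
    (d ^ r + C • xv) ^ lam
      = ∑ j ∈ Finset.range (lam + 1), ∑ s ∈ Finset.range (lam + 1),
          (C ^ (j + s) * ddjs r lam j s) •
            (xv ^ s * ipow d dinv ((r : ℤ) * ((lam : ℤ) - (s : ℤ)) - ((r : ℤ) + 1) * (j : ℤ))) :=
  stmt17_general r A d dinv xv h1 h2 h3 C lam
end
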